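/- For each i = 1, …, d, ∫_{[0,1]^d} μ(ξ) ( ∫_{ℝ^d} a(ξ−q) (ξ−q)^i μ(q) dq ) dξ = 0; that is, the right-hand side f(ξ) = ∫_{ℝ^d} a(ξ−q)(ξ−q) μ(q) dq of the first corrector equation satisfies the solvability condition ∫_{[0,1]^d} f(ξ) μ(ξ) dξ = 0. -/

import Mathlib

open MeasureTheory Filter Topology
open scoped ENNReal Pointwise

noncomputable section

/-! Writing the inner integral as a convolution and exchanging the order of integration (Fubini,
justified by the first moment of `a` and the boundedness of `μ`), the quantity becomes
`∫ a(z) z_i c(z) dz`, where `c(z) = ∫_{[0,1]^d} μ(ξ) μ(ξ - z) dξ` is the autocorrelation of `μ`.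
By periodicity, shifting the cell by `z` shows that `c` is even; since `a` is even and `z_i` is
odd, the integrand is odd and the integral vanishes. -/

/-- The period cell `[0,1]^d`. -/
def cell (d : ℕ) : Set (EuclideanSpace ℝ (Fin d)) := {x | ∀ i, x i ∈ Set.Icc (0:ℝ) 1}

theorem Function.Periodic.of_mem_span_int {α β : Type*} [AddCommGroup α] {f : α → β} {s : Set α}
    (hs : ∀ c ∈ s, Function.Periodic f c) {c : α} (hc : c ∈ Submodule.span ℤ s) :
    Function.Periodic f c := by
  induction hc using Submodule.span_induction with
  | mem c hc => exact hs c hc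
  | zero => exact fun x => by rw [add_zero]
  | add _ _ _ _ h₁ h₂ => exact h₁.add_period h₂
  | smul n _ _ h => exact h.zsmul n

theorem Function.Odd.integral_eq_zero {G E : Type*} [MeasurableSpace G] [AddGroup G]
    [MeasurableNeg G] [NormedAddCommGroup E] [NormedSpace ℝ E] {μ : Measure G} [μ.IsNegInvariant]
    {f : G → E} (hf : f.Odd) : ∫ x, f x ∂μ = 0 := by
  have h := integral_neg_eq_self f μ
  simp only [hf.eq, integral_neg] at h
  have := IsAddTorsionFree.of_isTorsionFree (R := ℝ) (M := E)
  exact self_eq_neg.mp h.symm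

theorem integrable_norm_mul_of_integrable_sq_norm_mul {E : Type*} [NormedAddCommGroup E]
    [MeasurableSpace E] [OpensMeasurableSpace E] {μ : Measure E} {a : E → ℝ}
    (ha : Integrable a μ) (ha₂ : Integrable (fun z => ‖z‖ ^ 2 * a z) μ) :
    Integrable (fun z => ‖z‖ * a z) μ := by
  refine (ha.norm.add ha₂.norm).mono' (continuous_norm.aestronglyMeasurable.mul ha.1) ?_
  refine .of_forall fun z => ?_
  have h_le : ‖z‖ ≤ 1 + ‖z‖ ^ 2 := by nlinarith [sq_nonneg (‖z‖ - 1)]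
  calc ‖‖z‖ * a z‖ = ‖z‖ * ‖a z‖ := by rw [norm_mul, norm_norm]
    _ ≤ (1 + ‖z‖ ^ 2) * ‖a z‖ := by gcongr
    _ = ‖a z‖ + ‖‖z‖ ^ 2 * a z‖ := by rw [norm_mul, norm_pow, norm_norm]; ring

namespace ZSpan

variable {ι E : Type*} [Finite ι] [NormedAddCommGroup E] [NormedSpace ℝ E] [MeasurableSpace E]
  [BorelSpace E] (μ : Measure E) [μ.IsAddLeftInvariant] (b : Module.Basis ι ℝ E)

theorem setIntegral_fundamentalDomain_comp_add_right {F : Type*} [NormedAddCommGroup F]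
    [NormedSpace ℝ F] {f : E → F} (hf : ∀ l ∈ Submodule.span ℤ (Set.range b), f.Periodic l)
    (z : E) : ∫ x in fundamentalDomain b, f (x + z) ∂μ = ∫ x in fundamentalDomain b, f x ∂μ := by
  have := b.finiteDimensional_of_finite
  have : Countable (Submodule.span ℤ (Set.range b)).toAddSubgroup :=
    inferInstanceAs (Countable (Submodule.span ℤ (Set.range b)))
  have hD := ZSpan.isAddFundamentalDomain' b μ
  have h_image : (· + z) '' fundamentalDomain b = z +ᵥ fundamentalDomain b := by
    rw [← Set.image_vadd]
    exact Set.image_congr fun x _ => add_comm x z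
  calc ∫ x in fundamentalDomain b, f (x + z) ∂μ
      = ∫ x in z +ᵥ fundamentalDomain b, f x ∂μ := by
        rw [← h_image, (measurePreserving_add_right μ z).setIntegral_image_emb
          (measurableEmbedding_addRight z)]
    _ = ∫ x in fundamentalDomain b, f x ∂μ :=
        (hD.vadd_of_comm z).setIntegral_eq hD fun l x => by
          rw [AddSubgroup.vadd_def, vadd_eq_add, add_comm]; exact hf l l.2 x

theorem setIntegral_fundamentalDomain_mul_comp_add {m : E → ℝ}
    (hm : ∀ l ∈ Submodule.span ℤ (Set.range b), m.Periodic l) (z : E) :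
    ∫ x in fundamentalDomain b, m x * m (x + z) ∂μ
      = ∫ x in fundamentalDomain b, m x * m (x - z) ∂μ := by
  have := setIntegral_fundamentalDomain_comp_add_right μ b (f := fun x => m x * m (x - z))
    (fun l hl x => by simp only [add_sub_right_comm, hm l hl x, hm l hl (x - z)]) z
  simpa only [add_sub_cancel_right, mul_comm] using this

end ZSpan

theorem cell_ae_eq_fundamentalDomain (d : ℕ) :
    cell d =ᵐ[volume] ZSpan.fundamentalDomain (EuclideanSpace.basisFun (Fin d) ℝ).toBasis := by
  have h : cell d = parallelepiped (EuclideanSpace.basisFun (Fin d) ℝ).toBasis := by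
    rw [parallelepiped_basis_eq]; rfl
  rw [h]
  exact (ZSpan.fundamentalDomain_ae_parallelepiped _ volume).symm

theorem volume_cell_ne_top (d : ℕ) : volume (cell d) ≠ ∞ := by
  rw [measure_congr (cell_ae_eq_fundamentalDomain d)]
  exact (ZSpan.fundamentalDomain_isBounded _).measure_lt_top.ne

section Correlation

variable {G : Type*} [MeasurableSpace G] [AddCommGroup G] [MeasurableAdd₂ G] [MeasurableNeg G]
  {μ ν : Measure G} [SFinite μ] [μ.IsAddLeftInvariant] [μ.IsNegInvariant] [IsFiniteMeasure ν]

theorem integral_mul_integral_comp_sub_mul {k m : G → ℝ} (hk : Integrable k μ)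
    (hm : Measurable m) {C : ℝ} (hmC : ∀ x, |m x| ≤ C) :
    ∫ ξ, m ξ * ∫ q, k (ξ - q) * m q ∂μ ∂ν = ∫ z, k z * ∫ ξ, m ξ * m (ξ - z) ∂ν ∂μ := by
  have h_int : Integrable (Function.uncurry fun ξ z => m ξ * (k z * m (ξ - z))) (ν.prod μ) := by
    refine ((integrable_const (C * C)).mul_prod hk.norm).mono'
      ((hm.comp measurable_fst).aestronglyMeasurable.mul
        (hk.1.comp_snd.mul (hm.comp (measurable_fst.sub measurable_snd)).aestronglyMeasurable))
      (.of_forall fun p => ?_)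
    have hC : 0 ≤ C := (abs_nonneg _).trans (hmC 0)
    calc ‖m p.1 * (k p.2 * m (p.1 - p.2))‖ = |m p.1| * (‖k p.2‖ * |m (p.1 - p.2)|) := by
          simp only [norm_mul, Real.norm_eq_abs]
      _ ≤ C * (‖k p.2‖ * C) := by gcongr <;> exact hmC _
      _ = C * C * ‖k p.2‖ := by ring
  calc ∫ ξ, m ξ * ∫ q, k (ξ - q) * m q ∂μ ∂ν
      = ∫ ξ, ∫ z, m ξ * (k z * m (ξ - z)) ∂μ ∂ν := by
        congr 1 with ξ
        rw [← integral_sub_left_eq_self _ μ ξ, ← integral_const_mul]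
        simp only [sub_sub_cancel]
    _ = ∫ z, ∫ ξ, m ξ * (k z * m (ξ - z)) ∂ν ∂μ := integral_integral_swap h_int
    _ = ∫ z, k z * ∫ ξ, m ξ * m (ξ - z) ∂ν ∂μ := by
        congr 1 with z
        rw [← integral_const_mul]
        congr 1 with ξ
        ring

end Correlation

theorem stmt4_general
    (d : ℕ)
    (a : EuclideanSpace ℝ (Fin d) → ℝ)
    (ha_int : Integrable a)
    (ha_symm : ∀ z, a (-z) = a z)
    (ha_mom2 : Integrable (fun z => ‖z‖ ^ 2 * a z))
    (mu : EuclideanSpace ℝ (Fin d) → ℝ)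
    (hmu_meas : Measurable mu)
    (hmu_per : ∀ x i, mu (x + EuclideanSpace.single i 1) = mu x)
    (α₁ α₂ : ℝ)
    (hmu_lb : ∀ x, α₁ ≤ mu x) (hmu_ub : ∀ x, mu x ≤ α₂) :
    ∀ i : Fin d,
      (∫ ξ in cell d, mu ξ * ∫ q, a (ξ - q) * (ξ - q) i * mu q) = 0 := by
  intro i
  have hper : ∀ l ∈ Submodule.span ℤ (Set.range (EuclideanSpace.basisFun (Fin d) ℝ).toBasis),
      mu.Periodic l :=
    fun l => Function.Periodic.of_mem_span_int (by
      rintro _ ⟨j, rfl⟩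
      simpa using (hmu_per · j))
  have hk : Integrable (fun z => a z * z i) := by
    refine (integrable_norm_mul_of_integrable_sq_norm_mul ha_int ha_mom2).mono
      (ha_int.1.mul (by fun_prop)) (.of_forall fun z => ?_)
    rw [norm_mul, norm_mul, norm_norm, mul_comm]
    gcongr
    exact PiLp.norm_apply_le z i
  have : IsFiniteMeasure (volume.restrict (cell d)) :=
    isFiniteMeasure_restrict.mpr (volume_cell_ne_top d)
  have h_even : Function.Even fun z => ∫ ξ in cell d, mu ξ * mu (ξ - z) := fun z => by
    simp only [sub_neg_eq_add, setIntegral_congr_set (cell_ae_eq_fundamentalDomain d)]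
    exact ZSpan.setIntegral_fundamentalDomain_mul_comp_add volume _ hper z
  have h_odd : Function.Odd fun z : EuclideanSpace ℝ (Fin d) => z i := fun _ => rfl
  calc _ = ∫ z, a z * z i * ∫ ξ in cell d, mu ξ * mu (ξ - z) :=
        integral_mul_integral_comp_sub_mul (k := fun z => a z * z i) hk hmu_meas
          (fun x => abs_le_max_abs_abs (hmu_lb x) (hmu_ub x))
    _ = 0 := ((Function.Even.mul_odd ha_symm h_odd).mul_even h_even).integral_eq_zero

/-- For each `i`, `∫_{[0,1]^d} μ(ξ) (∫_{ℝ^d} a(ξ−q)(ξ−q)^i μ(q) dq) dξ = 0`,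
i.e. the right-hand side of the first corrector equation satisfies the solvability condition. -/
theorem stmt4
    (d : ℕ) (hd : 1 ≤ d)
    (a : EuclideanSpace ℝ (Fin d) → ℝ)
    (ha_meas : Measurable a)
    (ha_int : Integrable a)
    (ha_nonneg : ∀ z, 0 ≤ a z)
    (ha_symm : ∀ z, a (-z) = a z)
    (ha_mom2 : Integrable (fun z => ‖z‖ ^ 2 * a z))
    (mu : EuclideanSpace ℝ (Fin d) → ℝ)
    (hmu_meas : Measurable mu)
    (hmu_per : ∀ x i, mu (x + EuclideanSpace.single i 1) = mu x)
    (α₁ α₂ : ℝ) (hα₁ : 0 < α₁) (hα₁₂ : α₁ ≤ α₂)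
    (hmu_lb : ∀ x, α₁ ≤ mu x) (hmu_ub : ∀ x, mu x ≤ α₂) :
    ∀ i : Fin d,
      (∫ ξ in cell d, mu ξ * ∫ q, a (ξ - q) * (ξ - q) i * mu q) = 0 :=
  stmt4_general d a ha_int ha_symm ha_mom2 mu hmu_meas hmu_per α₁ α₂ hmu_lb hmu_ub
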